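/- If a finitary first-order sentence φ is equivalent (over all structures) to a countable conjunction of ∀ₙ-sentences, then φ is equivalent to a single ∀ₙ-sentence. -/

import Mathlib

open FirstOrder FirstOrder.Language

/-- `QHier b k φ`: `φ` is a `∃ₖ`-formula (if `b = true`) or a `∀ₖ`-formula (if `b = false`),
i.e. a prenex formula with at most `k` alternating quantifier blocks, beginning with `∃`
(resp. `∀`). -/
inductive QHier {L : FirstOrder.Language} {α : Type} : Bool → ℕ → {n : ℕ} → L.BoundedFormula α n → Prop
  | qf {b k n} {φ : L.BoundedFormula α n} : φ.IsQF → QHier b k φ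
  | ex {k n} {φ : L.BoundedFormula α (n + 1)} : QHier true (k + 1) φ → QHier true (k + 1) φ.ex
  | all {k n} {φ : L.BoundedFormula α (n + 1)} : QHier false (k + 1) φ → QHier false (k + 1) φ.all
  | dual {b k n} {φ : L.BoundedFormula α n} : QHier (!b) k φ → QHier b (k + 1) φ

/-- The set of `∃ₖ`-sentences of `L`. -/
def ExSet (L : FirstOrder.Language) (k : ℕ) : Set L.Sentence := {φ | QHier true k φ}
/-- The set of `∀ₖ`-sentences of `L`. -/
def AllSet (L : FirstOrder.Language) (k : ℕ) : Set L.Sentence := {φ | QHier false k φ}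

/-- A level-sentence set: the set of `∃ₖ`- or of `∀ₖ`-sentences for some `k`. -/
def IsLevelSet {L : FirstOrder.Language} (Λ : Set L.Sentence) : Prop :=
  ∃ k, Λ = ExSet L k ∨ Λ = AllSet L k

/-- `¬Λ`: the set of sentences (logically) equivalent to the negation of a sentence in `Λ`. -/
def NegOf {L : FirstOrder.Language} (Λ : Set L.Sentence) : Set L.Sentence :=
  {ψ | ∃ χ ∈ Λ, (∅ : L.Theory) ⊨ᵇ ψ.iff χ.not}

/-- `Th_Λ(S)`: the set of `Λ`-sentences provable from (equivalently, entailed by) `S`. -/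
def ThL {L : FirstOrder.Language} (Λ : Set L.Sentence) (S : L.Theory) : Set L.Sentence :=
  {ψ ∈ Λ | S ⊨ᵇ ψ}

/-!
By compactness, `φ` already follows from finitely many members of `A`, and conversely implies
them all, so it is equivalent to their conjunction. A conjunction of two `∀ₙ`-formulas is again
a `∀ₙ`-formula up to equivalence: pull the quantifier blocks of both conjuncts out one at a time,
which is sound over nonempty structures.

Compactness is proved by a Łoś argument with an ultraproduct over `ℕ`; indexing by `ℕ`, which
the countability of `A` allows, keeps the ultraproduct in `Type`.
-/

namespace FirstOrder.Language.BoundedFormula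

variable {L : FirstOrder.Language} {α : Type} {n : ℕ}

def IsEquivInf (θ φ ψ : L.BoundedFormula α n) : Prop :=
  ∀ (M : Type) [L.Structure M] [Nonempty M] (v : α → M) (xs : Fin n → M),
    θ.Realize v xs ↔ φ.Realize v xs ∧ ψ.Realize v xs

theorem isEquivInf_inf (φ ψ : L.BoundedFormula α n) : IsEquivInf (φ ⊓ ψ) φ ψ :=
  fun _ _ _ _ _ => realize_inf

theorem IsEquivInf.symm {θ φ ψ : L.BoundedFormula α n} (h : IsEquivInf θ φ ψ) :
    IsEquivInf θ ψ φ :=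
  fun M _ _ v xs => (h M v xs).trans and_comm

theorem IsEquivInf.all {θ φ : L.BoundedFormula α (n + 1)} {ψ : L.BoundedFormula α n}
    (h : IsEquivInf θ φ (ψ.liftAt 1 n)) : IsEquivInf θ.all φ.all ψ := by
  intro M _ _ v xs
  have h' := fun a => h M v (Fin.snoc xs a)
  simp only [realize_liftAt_one_self, Fin.snoc_comp_castSucc] at h'
  simp only [realize_all, h']
  exact ⟨fun H => ⟨fun a => (H a).1, (H (Classical.arbitrary M)).2⟩, fun H a => ⟨H.1 a, H.2⟩⟩

theorem IsEquivInf.ex {θ φ : L.BoundedFormula α (n + 1)} {ψ : L.BoundedFormula α n}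
    (h : IsEquivInf θ φ (ψ.liftAt 1 n)) : IsEquivInf θ.ex φ.ex ψ := by
  intro M _ _ v xs
  have h' := fun a => h M v (Fin.snoc xs a)
  simp only [realize_liftAt_one_self, Fin.snoc_comp_castSucc] at h'
  simp only [realize_ex, h', exists_and_right]

end FirstOrder.Language.BoundedFormula

open BoundedFormula

namespace QHier

variable {L : FirstOrder.Language} {α : Type}

theorem castLE {b k m} {φ : L.BoundedFormula α m} (hφ : QHier b k φ) {n} (h : m ≤ n) :
    QHier b k (φ.castLE h) := by
  induction hφ generalizing n with
  | qf hq => exact .qf hq.castLE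
  | all _ ih => exact (ih (Nat.add_le_add_right h 1)).all
  | ex _ ih => exact (ih (Nat.add_le_add_right h 1)).ex
  | dual _ ih => exact (ih h).dual

theorem liftAt {b k m} {φ : L.BoundedFormula α m} (hφ : QHier b k φ) (n' m' : ℕ) :
    QHier b k (φ.liftAt n' m') := by
  induction hφ with
  | qf hq => exact .qf hq.liftAt
  | all _ ih => exact (ih.castLE (by omega)).all
  | ex _ ih => exact (ih.castLE (by omega)).ex
  | dual _ ih => exact ih.dual

theorem exists_isEquivInf_of_isQF {b k n} {φ : L.BoundedFormula α n} (hφ : QHier b k φ)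
    {ψ : L.BoundedFormula α n} (hψ : ψ.IsQF) : ∃ θ, QHier b k θ ∧ IsEquivInf θ φ ψ := by
  induction hφ with
  | qf h => exact ⟨_, .qf (h.inf hψ), isEquivInf_inf _ _⟩
  | all _ ih =>
    obtain ⟨θ, hθ, e⟩ := ih hψ.liftAt
    exact ⟨θ.all, hθ.all, e.all⟩
  | ex _ ih =>
    obtain ⟨θ, hθ, e⟩ := ih hψ.liftAt
    exact ⟨θ.ex, hθ.ex, e.ex⟩
  | dual _ ih =>
    obtain ⟨θ, hθ, e⟩ := ih hψ
    exact ⟨θ, hθ.dual, e⟩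

theorem exists_isEquivInf_of_dual {b : Bool} {k : ℕ}
    (ih : ∀ {n} {φ ψ : L.BoundedFormula α n}, QHier (!b) k φ → QHier (!b) k ψ →
      ∃ θ, QHier (!b) k θ ∧ IsEquivInf θ φ ψ)
    {n} {φ ψ : L.BoundedFormula α n} (hφ : QHier (!b) k φ) (hψ : QHier b (k + 1) ψ) :
    ∃ θ, QHier b (k + 1) θ ∧ IsEquivInf θ φ ψ := by
  generalize hK : k + 1 = K at hψ
  induction hψ with
  | qf h =>
    subst hK
    obtain ⟨θ, hθ, e⟩ := exists_isEquivInf_of_isQF hφ h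
    exact ⟨θ, hθ.dual, e⟩
  | all _ ih' =>
    obtain ⟨θ, hθ, e⟩ := ih' ih (hφ.liftAt 1 _) hK
    exact ⟨θ.all, hθ.all, e.symm.all.symm⟩
  | ex _ ih' =>
    obtain ⟨θ, hθ, e⟩ := ih' ih (hφ.liftAt 1 _) hK
    exact ⟨θ.ex, hθ.ex, e.symm.ex.symm⟩
  | dual hψ' _ =>
    obtain rfl := Nat.succ_injective hK
    obtain ⟨θ, hθ, e⟩ := ih hφ hψ'
    exact ⟨θ, hθ.dual, e⟩

theorem exists_isEquivInf {b k n} {φ ψ : L.BoundedFormula α n}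
    (hφ : QHier b k φ) (hψ : QHier b k ψ) : ∃ θ, QHier b k θ ∧ IsEquivInf θ φ ψ := by
  induction k using Nat.strong_induction_on generalizing b n φ ψ with
  | _ k ihk =>
    induction hφ with
    | qf h =>
      obtain ⟨θ, hθ, e⟩ := exists_isEquivInf_of_isQF hψ h
      exact ⟨θ, hθ, e.symm⟩
    | all _ ih =>
      obtain ⟨θ, hθ, e⟩ := ih ihk (hψ.liftAt 1 _)
      exact ⟨θ.all, hθ.all, e.all⟩
    | ex _ ih =>
      obtain ⟨θ, hθ, e⟩ := ih ihk (hψ.liftAt 1 _)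
      exact ⟨θ.ex, hθ.ex, e.ex⟩
    | dual hφ' _ =>
      exact exists_isEquivInf_of_dual (ihk _ (Nat.lt_succ_self _)) hφ' hψ

theorem exists_realize_iff_forall_mem (b : Bool) (k : ℕ) (s : Finset L.Sentence)
    (hs : ∀ ψ ∈ s, QHier b k ψ) :
    ∃ θ : L.Sentence, QHier b k θ ∧
      ∀ (M : Type) [L.Structure M] [Nonempty M], M ⊨ θ ↔ ∀ ψ ∈ s, M ⊨ ψ := by
  classical
  induction s using Finset.induction_on with
  | empty => exact ⟨⊤, .qf IsQF.top, fun M _ _ => by simp⟩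
  | insert χ s _ ih =>
    obtain ⟨θ, hθ, hθs⟩ := ih fun ψ hψ => hs ψ (Finset.mem_insert_of_mem hψ)
    obtain ⟨θ', hθ', e⟩ := exists_isEquivInf hθ (hs χ (Finset.mem_insert_self χ s))
    refine ⟨θ', hθ', fun M _ _ => ?_⟩
    rw [Finset.forall_mem_insert, ← hθs M, and_comm]
    exact e M default default

end QHier

section Compactness

variable {L : FirstOrder.Language}

theorem exists_realize_of_eventually_realize {T : L.Theory} {φ : L.Sentence}
    (h : ∀ (M : Type) [L.Structure M] [Nonempty M], (∀ ψ ∈ T, M ⊨ ψ) → M ⊨ φ)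
    (M : ℕ → Type) [∀ k, L.Structure (M k)] [∀ k, Nonempty (M k)]
    (hM : ∀ ψ ∈ T, ∀ᶠ k in Filter.atTop, M k ⊨ ψ) : ∃ k, M k ⊨ φ := by
  let U : Filter ℕ := Filter.hyperfilter ℕ
  have hU : U.Product M ⊨ φ := h _ fun ψ hψ =>
    (Ultraproduct.sentence_realize ψ).2 ((hM ψ hψ).filter_mono Nat.hyperfilter_le_atTop)
  exact ((Ultraproduct.sentence_realize φ).1 hU).exists

theorem exists_finset_of_countable {T : L.Theory} (hT : T.Countable) {φ : L.Sentence}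
    (h : ∀ (M : Type) [L.Structure M] [Nonempty M], (∀ ψ ∈ T, M ⊨ ψ) → M ⊨ φ) :
    ∃ T₀ : Finset L.Sentence, ↑T₀ ⊆ T ∧
      ∀ (M : Type) [L.Structure M] [Nonempty M], (∀ ψ ∈ T₀, M ⊨ ψ) → M ⊨ φ := by
  classical
  rcases T.eq_empty_or_nonempty with rfl | hne
  · exact ⟨∅, by simp, fun M _ _ _ => h M (by simp)⟩
  obtain ⟨f, rfl⟩ := hT.exists_eq_range hne
  by_contra! hcon
  have hk : ∀ k : ℕ, ∃ (M : Type) (_ : L.Structure M) (_ : Nonempty M),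
      (∀ i < k, M ⊨ f i) ∧ ¬M ⊨ φ := fun k => by
    obtain ⟨M, _, hMne, hM, hφ⟩ := hcon ((Finset.range k).image f) (by simp [Set.subset_def])
    exact ⟨M, _, hMne,
      fun i hi => hM (f i) (Finset.mem_image_of_mem f (Finset.mem_range.2 hi)), hφ⟩
  choose M _ _ hM hφ using hk
  obtain ⟨k, hk⟩ := exists_realize_of_eventually_realize h M <| by
    rintro _ ⟨i, rfl⟩
    exact Filter.eventually_atTop.2 ⟨i + 1, fun k hk => hM k i hk⟩
  exact hφ k hk

end Compactness

/-- If a finitary sentence `φ` is equivalent over all structures to a countable conjunction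
of `∀ₙ`-sentences, then `φ` is equivalent to a single `∀ₙ`-sentence. -/
theorem statement13 {L : FirstOrder.Language} (φ : L.Sentence) (n : ℕ)
    (A : L.Theory) (hAc : A.Countable) (hA : ∀ ψ ∈ A, QHier false n ψ)
    (heq : ∀ (M : Type) (_ : L.Structure M) (_ : Nonempty M),
      M ⊨ φ ↔ ∀ ψ ∈ A, M ⊨ ψ) :
    ∃ θ : L.Sentence, QHier false n θ ∧
      ∀ (M : Type) (_ : L.Structure M) (_ : Nonempty M), M ⊨ φ ↔ M ⊨ θ := by
  obtain ⟨A₀, hA₀A, hA₀φ⟩ := exists_finset_of_countable hAc fun M _ hM => (heq M _ hM).2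
  obtain ⟨θ, hθ, hθA₀⟩ :=
    QHier.exists_realize_iff_forall_mem false n A₀ fun ψ hψ => hA ψ (hA₀A hψ)
  refine ⟨θ, hθ, fun M _ hM => ⟨fun hφ => ?_, fun hθM => hA₀φ M ((hθA₀ M).1 hθM)⟩⟩
  exact (hθA₀ M).2 fun ψ hψ => (heq M _ hM).1 hφ ψ (hA₀A hψ)
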